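/- In the independent-dropping model on a finite connected graph, the profile chain is uniformly communicating to S₁ with communication time s = 3(|V|−1): there exists α' > 0 such that inf_{x ∈ S, x' ∈ S₁} M^s(x, x') ≥ α'. Specifically, for any starting profile with maximum at i and any target j, applying the i-ordering, then |V|−1 drops at j, then the j-ordering, yields x^{(j)}. -/

import Mathlib

-- n-step transition probabilities of a kernel on a countable space.
open Classical in
noncomputable def mpow {S : Type*} (M : S → S → ℝ) : ℕ → S → S → ℝ
  | 0 => fun x y => if x = y then 1 else 0
  | (n + 1) => fun x y => ∑' z, mpow M n x z * M z y

-- Adding a particle at `i` with screening, acting on (ℤ-valued) height profiles.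
open Classical in
noncomputable def dropZ {V : Type*} [Fintype V] (G : SimpleGraph V) (i : V) (x : V → ℤ) :
    V → ℤ :=
  fun j => if j = i then
    (Finset.univ.filter fun k => k = i ∨ G.Adj i k).sup'
      ⟨i, by simp⟩ x + 1
  else x j

-- Profile seen from the maximum: subtract the maximal height.
noncomputable def normP {V : Type*} [Fintype V] [Nonempty V] (x : V → ℤ) : V → ℤ :=
  fun j => x j - Finset.univ.sup' Finset.univ_nonempty x

-- Transition matrix of the profile chain for independent droppings with law `p`.
open Classical in
noncomputable def Mchain {V : Type*} [Fintype V] [Nonempty V] (G : SimpleGraph V)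
    (p : V → ℝ) (x y : V → ℤ) : ℝ :=
  ∑ i : V, if y = normP (dropZ G i x) then p i else 0

-- The profile `x⁽ⁱ⁾` obtained by dropping particles along the `i`-ordering `ord i`
-- starting from a profile with maximum at `i`.
noncomputable def xprof {V : Type*} [Fintype V] [Nonempty V] (G : SimpleGraph V)
    (ord : V → Fin (Fintype.card V - 1) → V) (i : V) : V → ℤ :=
  normP ((List.ofFn (ord i)).foldl (fun x v => dropZ G v x) (fun _ => 0))

/-!
Dropping along the `i`-ordering from any profile whose maximum sits at `i` produces, up to a
shift, the same profile as dropping from the flat profile: every new site is screened by an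
earlier site that is at least as high as everything else, so the lower part of the starting
profile is never seen. Hence from `x` with maximum at `i₀`, the `i₀`-ordering reaches a fixed
profile of height at most `|V| − 1`; `|V| − 1` drops at `j` then move the maximum to `j`; and the
`j`-ordering produces `x⁽ʲ⁾`. Each of these `3(|V| − 1)` drops has probability at least `min p`.
-/

open Finset

section MatrixPower

variable {S : Type*} {M : S → S → ℝ}

lemma mpow_nonneg (hM : ∀ x y, 0 ≤ M x y) (n : ℕ) (x y : S) : 0 ≤ mpow M n x y := by
  induction n generalizing y with
  | zero => simp only [mpow]; split <;> norm_num
  | succ n ih => exact tsum_nonneg fun z => mul_nonneg (ih z) (hM z y)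

lemma mpow_support_finite (hM : ∀ x, (Function.support (M x)).Finite) (n : ℕ) (x : S) :
    (Function.support (mpow M n x)).Finite := by
  induction n with
  | zero =>
    refine (Set.finite_singleton x).subset fun y hy => ?_
    by_contra hxy
    exact hy (if_neg fun h => hxy h.symm)
  | succ n ih =>
    refine (ih.biUnion fun z _ => hM z).subset fun y hy => ?_
    obtain ⟨z, hz⟩ : ∃ z, mpow M n x z * M z y ≠ 0 := by
      by_contra! h
      exact hy (by simp [mpow, h])
    exact Set.mem_biUnion (left_ne_zero_of_mul hz) (right_ne_zero_of_mul hz)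

lemma mpow_mul_le_mpow_succ (hM : ∀ x y, 0 ≤ M x y)
    (hMfin : ∀ x, (Function.support (M x)).Finite) (n : ℕ) (x z y : S) :
    mpow M n x z * M z y ≤ mpow M (n + 1) x y := by
  have hsum : Summable fun w => mpow M n x w * M w y :=
    summable_of_hasFiniteSupport <| (mpow_support_finite hMfin n x).subset
      fun w hw => left_ne_zero_of_mul hw
  exact hsum.le_tsum z fun w _ => mul_nonneg (mpow_nonneg hM n x w) (hM w y)

lemma pow_le_mpow_foldl (hM : ∀ x y, 0 ≤ M x y)
    (hMfin : ∀ x, (Function.support (M x)).Finite) {α : Type*} (step : S → α → S) {a : ℝ}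
    (ha : 0 ≤ a) (hstep : ∀ z v, a ≤ M z (step z v)) (L : List α) (x : S) :
    a ^ L.length ≤ mpow M L.length x (L.foldl step x) := by
  induction L using List.reverseRecOn with
  | nil => simp [mpow]
  | append_singleton L v ih =>
    rw [List.length_append, List.length_singleton, List.foldl_append, List.foldl_cons,
      List.foldl_nil, pow_succ]
    exact (mul_le_mul ih (hstep _ v) ha (mpow_nonneg hM _ _ _)).trans
      (mpow_mul_le_mpow_succ hM hMfin _ _ _ _)

end MatrixPower

lemma Finset.sup'_le_sup'_of_eqOn {α β : Type*} [LinearOrder β] {s : Finset α}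
    (hs : s.Nonempty) {P : Set α} {u w : α → β} (huw : Set.EqOn u w P) {j₀ : α} (hj₀ : j₀ ∈ s)
    (hu : ∀ k ∈ s, k ∉ P → u k ≤ w j₀) : s.sup' hs u ≤ s.sup' hs w := by
  refine sup'_le _ _ fun k hk => ?_
  by_cases hkP : k ∈ P
  · rw [huw hkP]
    exact le_sup' w hk
  · exact (hu k hk hkP).trans (le_sup' w hj₀)

section Attached

variable {V : Type*} (G : SimpleGraph V)

def AttachedSeq : List V → Set V → Prop
  | [], _ => True
  | v :: L, P => (∃ j ∈ P, G.Adj v j) ∧ AttachedSeq L (insert v P)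

variable {G} in
lemma attachedSeq_ofFn {n : ℕ} (f : Fin n → V) (P : Set V)
    (h : ∀ k, ∃ j, (j ∈ P ∨ ∃ l, l < k ∧ f l = j) ∧ G.Adj (f k) j) :
    AttachedSeq G (List.ofFn f) P := by
  induction n generalizing P with
  | zero => simp [AttachedSeq]
  | succ n ih =>
    rw [List.ofFn_succ]
    refine ⟨?_, ih _ _ fun k => ?_⟩
    · obtain ⟨j, hj | ⟨l, hl, -⟩, hadj⟩ := h 0
      · exact ⟨j, hj, hadj⟩
      · exact absurd hl (Fin.not_lt_zero l)
    · obtain ⟨j, hj | ⟨l, hl, rfl⟩, hadj⟩ := h k.succ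
      · exact ⟨j, Or.inl (Set.mem_insert_of_mem _ hj), hadj⟩
      · refine ⟨f l, ?_, hadj⟩
        cases l using Fin.cases with
        | zero => exact Or.inl (Set.mem_insert _ _)
        | succ l => exact Or.inr ⟨l, Fin.succ_lt_succ_iff.1 hl, rfl⟩

end Attached

section Drops

variable {V : Type*} [Fintype V] (G : SimpleGraph V)

noncomputable def dropSeq (L : List V) (x : V → ℤ) : V → ℤ :=
  L.foldl (fun y v => dropZ G v y) x

open Classical in
noncomputable def closedNbhd (i : V) : Finset V :=
  univ.filter fun k => k = i ∨ G.Adj i k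

variable {G}

lemma mem_closedNbhd {i k : V} : k ∈ closedNbhd G i ↔ k = i ∨ G.Adj i k := by
  simp [closedNbhd]

variable (G) in
lemma self_mem_closedNbhd (i : V) : i ∈ closedNbhd G i :=
  mem_closedNbhd.2 (Or.inl rfl)

variable (G) in
lemma closedNbhd_nonempty (i : V) : (closedNbhd G i).Nonempty :=
  ⟨i, self_mem_closedNbhd G i⟩

lemma dropZ_self (i : V) (x : V → ℤ) :
    dropZ G i x i = (closedNbhd G i).sup' (closedNbhd_nonempty G i) x + 1 := by
  simp [dropZ, closedNbhd]

lemma dropZ_of_ne {i j : V} (x : V → ℤ) (h : j ≠ i) : dropZ G i x j = x j := by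
  simp [dropZ, h]

lemma dropZ_add_const (i : V) (x : V → ℤ) (c : ℤ) :
    dropZ G i (fun j => x j + c) = fun j => dropZ G i x j + c := by
  funext j
  by_cases hj : j = i
  · subst hj
    rw [dropZ_self, dropZ_self, ← sup'_add]
    ring
  · simp only [dropZ_of_ne _ hj]

lemma lt_dropZ_self (i : V) (x : V → ℤ) : x i < dropZ G i x i := by
  rw [dropZ_self]
  linarith [le_sup' x (self_mem_closedNbhd G i)]

lemma le_dropZ (i : V) (x : V → ℤ) (j : V) : x j ≤ dropZ G i x j := by
  by_cases hj : j = i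
  · subst hj
    exact (lt_dropZ_self j x).le
  · rw [dropZ_of_ne x hj]

lemma dropZ_le {x : V → ℤ} {c : ℤ} (hx : ∀ j, x j ≤ c) (i j : V) :
    dropZ G i x j ≤ c + 1 := by
  by_cases hj : j = i
  · subst hj
    rw [dropZ_self]
    linarith [sup'_le (closedNbhd_nonempty G j) x fun k _ => hx k]
  · rw [dropZ_of_ne x hj]
    linarith [hx j]

@[simp]
lemma dropSeq_nil (x : V → ℤ) : dropSeq G [] x = x := rfl

@[simp]
lemma dropSeq_cons (v : V) (L : List V) (x : V → ℤ) :
    dropSeq G (v :: L) x = dropSeq G L (dropZ G v x) := rfl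

lemma dropSeq_append (L₁ L₂ : List V) (x : V → ℤ) :
    dropSeq G (L₁ ++ L₂) x = dropSeq G L₂ (dropSeq G L₁ x) :=
  List.foldl_append

lemma dropSeq_add_const (L : List V) (x : V → ℤ) (c : ℤ) :
    dropSeq G L (fun j => x j + c) = fun j => dropSeq G L x j + c := by
  induction L generalizing x with
  | nil => rfl
  | cons v L ih => rw [dropSeq_cons, dropZ_add_const, ih, dropSeq_cons]

lemma le_dropSeq (L : List V) (x : V → ℤ) (j : V) : x j ≤ dropSeq G L x j := by
  induction L generalizing x with
  | nil => exact le_rfl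
  | cons v L ih => exact (le_dropZ v x j).trans (ih _)

lemma dropSeq_le (L : List V) {x : V → ℤ} {c : ℤ} (hx : ∀ j, x j ≤ c) (j : V) :
    dropSeq G L x j ≤ c + L.length := by
  induction L generalizing x c with
  | nil => simpa using hx j
  | cons v L ih =>
    have := ih (x := dropZ G v x) (dropZ_le hx v)
    simp only [dropSeq_cons, List.length_cons, Nat.cast_succ]
    linarith

lemma dropSeq_replicate_of_ne (m : ℕ) {i j : V} (x : V → ℤ) (hj : j ≠ i) :
    dropSeq G (List.replicate m i) x j = x j := by
  induction m generalizing x with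
  | zero => rfl
  | succ m ih => rw [List.replicate_succ, dropSeq_cons, ih, dropZ_of_ne x hj]

lemma add_le_dropSeq_replicate_self (m : ℕ) (i : V) (x : V → ℤ) :
    x i + m ≤ dropSeq G (List.replicate m i) x i := by
  induction m generalizing x with
  | zero => simp
  | succ m ih =>
    rw [List.replicate_succ, dropSeq_cons]
    have := lt_dropZ_self (G := G) i x
    have := ih (dropZ G i x)
    push_cast
    linarith

lemma dropSeq_replicate_le_self {m : ℕ} {i : V} {x : V → ℤ}
    (hx : ∀ j, x j ≤ x i + m) (j : V) :
    dropSeq G (List.replicate m i) x j ≤ dropSeq G (List.replicate m i) x i := by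
  by_cases hj : j = i
  · rw [hj]
  · rw [dropSeq_replicate_of_ne m x hj]
    exact (hx j).trans (add_le_dropSeq_replicate_self m i x)

section Screening

def NonnegOnNonposOff (P : Set V) (u : V → ℤ) : Prop :=
  (∀ j ∈ P, 0 ≤ u j) ∧ ∀ j ∉ P, u j ≤ 0

variable {P : Set V} {u w : V → ℤ} {v : V}

lemma NonnegOnNonposOff.dropZ (hu : NonnegOnNonposOff P u) (hv : ∃ j ∈ P, G.Adj v j) :
    NonnegOnNonposOff (insert v P) (dropZ G v u) := by
  obtain ⟨j₀, hj₀, hadj⟩ := hv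
  refine ⟨fun k hk => ?_, fun k hk => ?_⟩
  · by_cases hkv : k = v
    · subst hkv
      rw [dropZ_self]
      linarith [le_sup' u (mem_closedNbhd.2 (Or.inr hadj)), hu.1 j₀ hj₀]
    · rw [dropZ_of_ne u hkv]
      exact hu.1 k ((Set.mem_insert_iff.1 hk).resolve_left hkv)
  · rw [Set.mem_insert_iff, not_or] at hk
    rw [dropZ_of_ne u hk.1]
    exact hu.2 k hk.2

lemma eqOn_dropZ (hu : NonnegOnNonposOff P u) (hw : NonnegOnNonposOff P w) (huw : Set.EqOn u w P)
    (hv : ∃ j ∈ P, G.Adj v j) : Set.EqOn (dropZ G v u) (dropZ G v w) (insert v P) := by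
  obtain ⟨j₀, hj₀, hadj⟩ := hv
  have hj₀N : j₀ ∈ closedNbhd G v := mem_closedNbhd.2 (Or.inr hadj)
  intro k hk
  by_cases hkv : k = v
  · subst hkv
    rw [dropZ_self, dropZ_self]
    congr 1
    -- sites of the neighbourhood outside `P` lie below `0 ≤ u j₀ = w j₀`
    exact le_antisymm
      (sup'_le_sup'_of_eqOn _ huw hj₀N fun k _ hk => (hu.2 k hk).trans (hw.1 j₀ hj₀))
      (sup'_le_sup'_of_eqOn _ huw.symm hj₀N fun k _ hk => (hw.2 k hk).trans (hu.1 j₀ hj₀))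
  · rw [dropZ_of_ne u hkv, dropZ_of_ne w hkv]
    exact huw ((Set.mem_insert_iff.1 hk).resolve_left hkv)

lemma eqOn_dropSeq_of_attachedSeq {L : List V} (hL : AttachedSeq G L P)
    (hu : NonnegOnNonposOff P u) (hw : NonnegOnNonposOff P w) (huw : Set.EqOn u w P) :
    Set.EqOn (dropSeq G L u) (dropSeq G L w) (P ∪ {j | j ∈ L}) := by
  induction L generalizing P u w with
  | nil => simpa using huw
  | cons v L ih =>
    refine (ih hL.2 (hu.dropZ hL.1) (hw.dropZ hL.1) (eqOn_dropZ hu hw huw hL.1)).mono ?_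
    intro j hj
    simp only [Set.mem_union, Set.mem_ofPred_eq, List.mem_cons, Set.mem_insert_iff] at hj ⊢
    tauto

end Screening

lemma dropSeq_eq_of_forall_le {L : List V} {i : V} (hL : AttachedSeq G L {i})
    (hcover : ∀ j, j ≠ i → j ∈ L) {x : V → ℤ} (hx : ∀ j, x j ≤ x i) :
    dropSeq G L x = fun j => dropSeq G L (fun _ => 0) j + x i := by
  have hshift : dropSeq G L x = dropSeq G L (fun j => (x j - x i) + x i) := by simp
  rw [hshift, dropSeq_add_const]
  funext j
  congr 1
  refine eqOn_dropSeq_of_attachedSeq hL ⟨?_, fun k _ => ?_⟩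
    ⟨fun _ _ => le_rfl, fun _ _ => le_rfl⟩ ?_ ?_
  · simp
  · linarith [hx k]
  · simp
  · by_cases hj : j = i
    · exact Or.inl hj
    · exact Or.inr (hcover j hj)

end Drops

section Profiles

variable {V : Type*} [Fintype V] [Nonempty V] {G : SimpleGraph V}

lemma normP_eq_add_const (x : V → ℤ) :
    normP x = fun j => x j + -univ.sup' univ_nonempty x :=
  funext fun _ => sub_eq_add_neg _ _

lemma normP_add_const (x : V → ℤ) (c : ℤ) : normP (fun j => x j + c) = normP x := by
  funext j
  simp only [normP, ← sup'_add]
  ring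

lemma normP_eq_self {x : V → ℤ} (hx : ∀ j, x j ≤ 0) {i : V} (hi : x i = 0) :
    normP x = x := by
  have hsup : univ.sup' univ_nonempty x = 0 :=
    le_antisymm (sup'_le _ _ fun j _ => hx j) (hi ▸ le_sup' x (mem_univ i))
  funext j
  simp [normP, hsup]

lemma foldl_normP_dropZ (L : List V) (x : V → ℤ) :
    L.foldl (fun z v => normP (dropZ G v z)) (normP x) = normP (dropSeq G L x) := by
  induction L generalizing x with
  | nil => rfl
  | cons v L ih =>
    have hstep : normP (dropZ G v (normP x)) = normP (dropZ G v x) := by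
      rw [normP_eq_add_const x, dropZ_add_const, normP_add_const]
    rw [List.foldl_cons, hstep, ih, dropSeq_cons]

lemma normP_dropSeq_append_replicate_append {L₀ L₁ : List V} {i₀ i : V}
    (hL₀ : AttachedSeq G L₀ {i₀}) (hc₀ : ∀ j, j ≠ i₀ → j ∈ L₀)
    (hL₁ : AttachedSeq G L₁ {i}) (hc₁ : ∀ j, j ≠ i → j ∈ L₁)
    {m : ℕ} (hm : L₀.length ≤ m) {x : V → ℤ} (hx : ∀ j, x j ≤ x i₀) :
    normP (dropSeq G (L₀ ++ List.replicate m i ++ L₁) x) =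
      normP (dropSeq G L₁ (fun _ => 0)) := by
  set R := dropSeq G L₀ (fun _ => 0)
  have hmax : ∀ j, dropSeq G (List.replicate m i) R j ≤ dropSeq G (List.replicate m i) R i := by
    refine dropSeq_replicate_le_self fun j => ?_
    have hRi : 0 ≤ R i := le_dropSeq L₀ _ i
    have hRj : R j ≤ 0 + L₀.length := dropSeq_le L₀ (fun _ => le_rfl) j
    have : (L₀.length : ℤ) ≤ m := by exact_mod_cast hm
    linarith
  rw [dropSeq_append, dropSeq_append, dropSeq_eq_of_forall_le hL₀ hc₀ hx, dropSeq_add_const,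
    dropSeq_add_const, dropSeq_eq_of_forall_le hL₁ hc₁ hmax, normP_add_const, normP_add_const]

end Profiles

section Chain

variable {V : Type*} [Fintype V] [Nonempty V] (G : SimpleGraph V) {p : V → ℝ}

lemma Mchain_nonneg (hp : ∀ i, 0 ≤ p i) (x y : V → ℤ) : 0 ≤ Mchain G p x y :=
  sum_nonneg fun i _ => by split <;> [exact hp i; exact le_rfl]

lemma Mchain_support_finite (x : V → ℤ) : (Function.support (Mchain G p x)).Finite := by
  refine (Set.finite_range fun i => normP (dropZ G i x)).subset fun y hy => ?_
  by_contra! h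
  exact hy (sum_eq_zero fun i _ => if_neg fun hy => h ⟨i, hy.symm⟩)

lemma le_Mchain_normP_dropZ (hp : ∀ i, 0 ≤ p i) (x : V → ℤ) (i : V) :
    p i ≤ Mchain G p x (normP (dropZ G i x)) := by
  have := single_le_sum (f := fun k => if normP (dropZ G i x) = normP (dropZ G k x) then p k else 0)
    (fun k _ => by split <;> [exact hp k; exact le_rfl]) (mem_univ i)
  simpa [Mchain] using this

end Chain

theorem stmt14_general {V : Type*} [Fintype V] [Nonempty V] (G : SimpleGraph V)
    (p : V → ℝ) (hp : ∀ i, 0 < p i)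
    (ord : V → Fin (Fintype.card V - 1) → V)
    (hrange : ∀ i, Set.range (ord i) = {i}ᶜ)
    (hord : ∀ i k, ∃ j, (j = i ∨ ∃ l, l < k ∧ ord i l = j) ∧ G.Adj (ord i k) j) :
    ∃ α' : ℝ, 0 < α' ∧
      ∀ x : V → ℤ, (∀ j, x j ≤ 0) → (∃ j, x j = 0) →
        ∀ i : V, α' ≤ mpow (Mchain G p) (3 * (Fintype.card V - 1)) x (xprof G ord i) := by
  set a := univ.inf' univ_nonempty p
  have ha : 0 < a := (lt_inf'_iff _).2 fun i _ => hp i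
  refine ⟨a ^ (3 * (Fintype.card V - 1)), pow_pos ha _, fun x hx ⟨i₀, hi₀⟩ i => ?_⟩
  have hattached : ∀ i, AttachedSeq G (List.ofFn (ord i)) {i} := fun i =>
    attachedSeq_ofFn _ _ (hord i)
  have hcover : ∀ i j, j ≠ i → j ∈ List.ofFn (ord i) := fun i j hj =>
    List.mem_ofFn.2 (show j ∈ Set.range (ord i) from hrange i ▸ hj)
  set L := List.ofFn (ord i₀) ++ List.replicate (Fintype.card V - 1) i ++ List.ofFn (ord i)
  have hlen : L.length = 3 * (Fintype.card V - 1) := by simp [L]; omega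
  have htarget : normP (dropSeq G L x) = xprof G ord i :=
    normP_dropSeq_append_replicate_append (hattached i₀) (hcover i₀) (hattached i) (hcover i)
      (by simp) (fun j => hi₀ ▸ hx j)
  have hp₀ : ∀ i, 0 ≤ p i := fun i => (hp i).le
  rw [← hlen, ← htarget, ← foldl_normP_dropZ, normP_eq_self hx hi₀]
  exact pow_le_mpow_foldl (Mchain_nonneg G hp₀) (Mchain_support_finite G) _ ha.le
    (fun z v => (inf'_le p (mem_univ v)).trans (le_Mchain_normP_dropZ G hp₀ z v)) L x

/-- The profile chain of the independent-dropping model is uniformly communicating to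
`S₁ = {x⁽ⁱ⁾ : i ∈ V}` with communication time `s = 3(|V|−1)`: there is `α' > 0` with
`M^s(x, x') ≥ α'` for every profile `x` and every `x' ∈ S₁`. -/
theorem stmt14 {V : Type*} [Fintype V] [DecidableEq V] [Nonempty V] (G : SimpleGraph V)
    (hconn : G.Connected)
    (p : V → ℝ) (hp : ∀ i, 0 < p i) (hp1 : ∑ i : V, p i = 1)
    (ord : V → Fin (Fintype.card V - 1) → V)
    (hinj : ∀ i, Function.Injective (ord i))
    (hrange : ∀ i, Set.range (ord i) = {i}ᶜ)
    (hord : ∀ i k, ∃ j, (j = i ∨ ∃ l, l < k ∧ ord i l = j) ∧ G.Adj (ord i k) j) :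
    ∃ α' : ℝ, 0 < α' ∧
      ∀ x : V → ℤ, (∀ j, x j ≤ 0) → (∃ j, x j = 0) →
        ∀ i : V, α' ≤ mpow (Mchain G p) (3 * (Fintype.card V - 1)) x (xprof G ord i) :=
  stmt14_general G p hp ord hrange hord
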